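/- arXiv:2208.08929 — 8 statements merged into one kernel-verified Lean document; each statement's English description precedes it below -/
import Mathlib

section
/- Each of the closed-loop response matrices Φxw, Φxe, Φuw, and Φue is block lower triangular. (Sufficiency direction, part 1, of the paper's Proposition 1: System Level Synthesis for partially-observed LTV systems.) -/
open Matrix

/-- `M` is block lower triangular: the `(t,s)` block vanishes whenever `s > t`. -/
def IsBlockLowerTri {T a b : ℕ} (M : Matrix (Fin T × Fin a) (Fin T × Fin b) ℝ) : Prop :=
  ∀ (t s : Fin T) (i : Fin a) (j : Fin b), t < s → M (t, i) (s, j) = 0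

/-- `M` is strictly block lower triangular: the `(t,s)` block vanishes whenever `s ≥ t`. -/
def IsStrictBlockLowerTri {T a b : ℕ} (M : Matrix (Fin T × Fin a) (Fin T × Fin b) ℝ) : Prop :=
  ∀ (t s : Fin T) (i : Fin a) (j : Fin b), t ≤ s → M (t, i) (s, j) = 0

/-- `M` is block diagonal: the `(t,s)` block vanishes whenever `s ≠ t`. -/
def IsBlockDiag {T a b : ℕ} (M : Matrix (Fin T × Fin a) (Fin T × Fin b) ℝ) : Prop :=
  ∀ (t s : Fin T) (i : Fin a) (j : Fin b), t ≠ s → M (t, i) (s, j) = 0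

lemma strict_lower {T a b : ℕ} {M : Matrix (Fin T × Fin a) (Fin T × Fin b) ℝ}
    (h : IsStrictBlockLowerTri M) : IsBlockLowerTri M :=
  fun t s i j hts => h t s i j hts.le

lemma diag_lower {T a b : ℕ} {M : Matrix (Fin T × Fin a) (Fin T × Fin b) ℝ}
    (h : IsBlockDiag M) : IsBlockLowerTri M :=
  fun t s i j hts => h t s i j hts.ne

lemma mul_lower {T a b c : ℕ} {A : Matrix (Fin T × Fin a) (Fin T × Fin b) ℝ}
    {B : Matrix (Fin T × Fin b) (Fin T × Fin c) ℝ}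
    (hA : IsBlockLowerTri A) (hB : IsBlockLowerTri B) : IsBlockLowerTri (A * B) := by
  intro t s i j hts
  rw [Matrix.mul_apply]
  apply Finset.sum_eq_zero
  rintro ⟨r, m⟩ -
  rcases lt_or_ge t r with h | h
  · rw [hA t r i m h, zero_mul]
  · rw [hB r s m j (lt_of_le_of_lt h hts), mul_zero]

lemma mul_strict {T a b c : ℕ} {A : Matrix (Fin T × Fin a) (Fin T × Fin b) ℝ}
    {B : Matrix (Fin T × Fin b) (Fin T × Fin c) ℝ}
    (hA : IsStrictBlockLowerTri A) (hB : IsBlockLowerTri B) :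
    IsStrictBlockLowerTri (A * B) := by
  intro t s i j hts
  rw [Matrix.mul_apply]
  apply Finset.sum_eq_zero
  rintro ⟨r, m⟩ -
  rcases le_or_gt t r with h | h
  · rw [hA t r i m h, zero_mul]
  · rw [hB r s m j (lt_of_lt_of_le h hts), mul_zero]

lemma add_lower {T a b : ℕ} {A B : Matrix (Fin T × Fin a) (Fin T × Fin b) ℝ}
    (hA : IsBlockLowerTri A) (hB : IsBlockLowerTri B) : IsBlockLowerTri (A + B) := by
  intro t s i j hts
  simp [Matrix.add_apply, hA t s i j hts, hB t s i j hts]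

lemma one_lower {T a : ℕ} : IsBlockLowerTri (1 : Matrix (Fin T × Fin a) (Fin T × Fin a) ℝ) := by
  intro t s i j hts
  exact Matrix.one_apply_ne (by simp [Prod.ext_iff]; intro h; exact absurd h hts.ne)

lemma pow_zero_high {T a : ℕ} {N : Matrix (Fin T × Fin a) (Fin T × Fin a) ℝ}
    (hN : IsStrictBlockLowerTri N) (k : ℕ) :
    ∀ (t s : Fin T) (i j : Fin a), (t : ℕ) < (s : ℕ) + k → (N ^ k) (t, i) (s, j) = 0 := by
  induction k with
  | zero =>
    intro t s i j h
    simp only [pow_zero]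
    exact Matrix.one_apply_ne (by
      simp only [Nat.add_zero] at h
      simp [Prod.ext_iff]
      intro he; exact absurd he (Fin.ne_of_lt h))
  | succ k ih =>
    intro t s i j h
    rw [pow_succ', Matrix.mul_apply]
    apply Finset.sum_eq_zero
    rintro ⟨r, m⟩ -
    rcases le_or_gt t r with hr | hr
    · rw [hN t r i m hr, zero_mul]
    · rw [ih r s m j (by omega), mul_zero]

lemma pow_lower {T a : ℕ} {N : Matrix (Fin T × Fin a) (Fin T × Fin a) ℝ}
    (hN : IsStrictBlockLowerTri N) (k : ℕ) : IsBlockLowerTri (N ^ k) :=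
  fun t s i j hts => pow_zero_high hN k t s i j (by omega)

lemma inv_one_sub_strict {T a : ℕ} {N : Matrix (Fin T × Fin a) (Fin T × Fin a) ℝ}
    (hN : IsStrictBlockLowerTri N) : IsBlockLowerTri (1 - N)⁻¹ := by
  have hnil : N ^ T = 0 := by
    ext ⟨t, i⟩ ⟨s, j⟩
    exact pow_zero_high hN T t s i j (by omega)
  have hinv : (1 - N) * (∑ k ∈ Finset.range T, N ^ k) = 1 := by
    have := Commute.one_right N
    have h := mul_neg_geom_sum N T
    rw [h, hnil, sub_zero]
  rw [Matrix.inv_eq_right_inv hinv]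
  have : ∀ k ∈ Finset.range T, IsBlockLowerTri (N ^ k) := fun k _ => pow_lower hN k
  -- sum of lower
  intro t s i j hts
  rw [Matrix.sum_apply]
  exact Finset.sum_eq_zero fun k hk => this k hk t s i j hts

lemma add_strict {T a b : ℕ} {A B : Matrix (Fin T × Fin a) (Fin T × Fin b) ℝ}
    (hA : IsStrictBlockLowerTri A) (hB : IsStrictBlockLowerTri B) :
    IsStrictBlockLowerTri (A + B) := by
  intro t s i j hts
  simp [Matrix.add_apply, hA t s i j hts, hB t s i j hts]

theorem stmt_3 (T dx du dy : ℕ) (hT : 1 ≤ T)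
    (ZA : Matrix (Fin T × Fin dx) (Fin T × Fin dx) ℝ)
    (ZB : Matrix (Fin T × Fin dx) (Fin T × Fin du) ℝ)
    (𝒞 : Matrix (Fin T × Fin dy) (Fin T × Fin dx) ℝ)
    (𝒦 : Matrix (Fin T × Fin du) (Fin T × Fin dy) ℝ)
    (hZA : IsStrictBlockLowerTri ZA) (hZB : IsStrictBlockLowerTri ZB)
    (hC : IsBlockDiag 𝒞) (hK : IsBlockLowerTri 𝒦)
    (Φxw : Matrix (Fin T × Fin dx) (Fin T × Fin dx) ℝ)
    (Φxe : Matrix (Fin T × Fin dx) (Fin T × Fin dy) ℝ)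
    (Φuw : Matrix (Fin T × Fin du) (Fin T × Fin dx) ℝ)
    (Φue : Matrix (Fin T × Fin du) (Fin T × Fin dy) ℝ)
    (hΦxw : Φxw = (1 - ZA - ZB * 𝒦 * 𝒞)⁻¹)
    (hΦxe : Φxe = Φxw * ZB * 𝒦)
    (hΦuw : Φuw = 𝒦 * 𝒞 * Φxw)
    (hΦue : Φue = 𝒦 * 𝒞 * Φxe + 𝒦) :
    IsBlockLowerTri Φxw ∧ IsBlockLowerTri Φxe ∧ IsBlockLowerTri Φuw ∧ IsBlockLowerTri Φue := by
  have hN : IsStrictBlockLowerTri (ZA + ZB * 𝒦 * 𝒞) :=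
    add_strict hZA (mul_strict (mul_strict hZB hK) (diag_lower hC))
  have hxw : IsBlockLowerTri Φxw := by
    rw [hΦxw, sub_sub]
    exact inv_one_sub_strict hN
  have hxe : IsBlockLowerTri Φxe := by
    rw [hΦxe]
    exact mul_lower (mul_lower hxw (strict_lower hZB)) hK
  have huw : IsBlockLowerTri Φuw := by
    rw [hΦuw]
    exact mul_lower (mul_lower hK (diag_lower hC)) hxw
  have hue : IsBlockLowerTri Φue := by
    rw [hΦue]
    exact add_lower (mul_lower (mul_lower hK (diag_lower hC)) hxe) hK
  exact ⟨hxw, hxe, huw, hue⟩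
end

section
/- The closed-loop response matrices satisfy the first affine System Level Synthesis constraint: (1 − ZA) * Φxw − ZB * Φuw = 1 and (1 − ZA) * Φxe − ZB * Φue = 0. (Sufficiency direction, part 2a, of the paper's Proposition 1.) -/
open Matrix

lemma strict_mul_lower {T a b c : ℕ}
    {S : Matrix (Fin T × Fin a) (Fin T × Fin b) ℝ}
    {L : Matrix (Fin T × Fin b) (Fin T × Fin c) ℝ}
    (hS : IsStrictBlockLowerTri S) (hL : IsBlockLowerTri L) :
    IsStrictBlockLowerTri (S * L) := by
  intro t s i j hts
  rw [Matrix.mul_apply]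
  apply Finset.sum_eq_zero
  rintro ⟨p, q⟩ -
  rcases lt_or_ge p s with h | h
  · rw [hL p s q j h, mul_zero]
  · rw [hS t p i q (hts.trans h), zero_mul]

lemma strict_pow {T a : ℕ}
    {S : Matrix (Fin T × Fin a) (Fin T × Fin a) ℝ}
    (hS : IsStrictBlockLowerTri S) :
    ∀ (k : ℕ) (t s : Fin T) (i j : Fin a), (t : ℕ) < (s : ℕ) + k →
      (S ^ k) (t, i) (s, j) = 0 := by
  intro k
  induction k with
  | zero =>
    intro t s i j h
    rw [pow_zero]
    exact Matrix.one_apply_ne (by simp only [Nat.add_zero] at h; exact fun he => absurd (congrArg Prod.fst he) (Fin.ne_of_lt h))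
  | succ k ih =>
    intro t s i j h
    rw [pow_succ']
    rw [Matrix.mul_apply]
    apply Finset.sum_eq_zero
    rintro ⟨p, q⟩ -
    rcases le_or_gt t p with hp | hp
    · rw [hS t p i q hp, zero_mul]
    · rw [ih p s q j (by omega), mul_zero]

lemma strict_isNilpotent {T a : ℕ}
    {S : Matrix (Fin T × Fin a) (Fin T × Fin a) ℝ}
    (hS : IsStrictBlockLowerTri S) : IsNilpotent S := by
  refine ⟨T, ?_⟩
  ext ⟨t, i⟩ ⟨s, j⟩
  rw [strict_pow hS T t s i j (by omega)]
  simp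

theorem stmt_4 (T dx du dy : ℕ) (hT : 1 ≤ T)
    (ZA : Matrix (Fin T × Fin dx) (Fin T × Fin dx) ℝ)
    (ZB : Matrix (Fin T × Fin dx) (Fin T × Fin du) ℝ)
    (𝒞 : Matrix (Fin T × Fin dy) (Fin T × Fin dx) ℝ)
    (𝒦 : Matrix (Fin T × Fin du) (Fin T × Fin dy) ℝ)
    (hZA : IsStrictBlockLowerTri ZA) (hZB : IsStrictBlockLowerTri ZB)
    (hC : IsBlockDiag 𝒞) (hK : IsBlockLowerTri 𝒦)
    (Φxw : Matrix (Fin T × Fin dx) (Fin T × Fin dx) ℝ)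
    (Φxe : Matrix (Fin T × Fin dx) (Fin T × Fin dy) ℝ)
    (Φuw : Matrix (Fin T × Fin du) (Fin T × Fin dx) ℝ)
    (Φue : Matrix (Fin T × Fin du) (Fin T × Fin dy) ℝ)
    (hΦxw : Φxw = (1 - ZA - ZB * 𝒦 * 𝒞)⁻¹)
    (hΦxe : Φxe = Φxw * ZB * 𝒦)
    (hΦuw : Φuw = 𝒦 * 𝒞 * Φxw)
    (hΦue : Φue = 𝒦 * 𝒞 * Φxe + 𝒦) :
    (1 - ZA) * Φxw - ZB * Φuw = 1 ∧ (1 - ZA) * Φxe - ZB * Φue = 0 := by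
  have hClower : IsBlockLowerTri 𝒞 := fun t s i j h => hC t s i j (Fin.ne_of_lt h)
  have hBKC : IsStrictBlockLowerTri (ZB * 𝒦 * 𝒞) :=
    strict_mul_lower (strict_mul_lower hZB hK) hClower
  have hS : IsStrictBlockLowerTri (ZA + ZB * 𝒦 * 𝒞) := by
    intro t s i j h
    simp [Matrix.add_apply, hZA t s i j h, hBKC t s i j h]
  have hM : IsUnit (1 - ZA - ZB * 𝒦 * 𝒞) := by
    rw [sub_sub]
    exact (strict_isNilpotent hS).isUnit_one_sub
  have hdet : IsUnit (1 - ZA - ZB * 𝒦 * 𝒞).det :=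
    (Matrix.isUnit_iff_isUnit_det _).mp hM
  have h1 : (1 - ZA - ZB * 𝒦 * 𝒞) * Φxw = 1 := by
    rw [hΦxw]; exact Matrix.mul_nonsing_inv _ hdet
  constructor
  · rw [show (1 - ZA) * Φxw - ZB * Φuw = (1 - ZA - ZB * 𝒦 * 𝒞) * Φxw by
      rw [hΦuw]; simp [Matrix.sub_mul, Matrix.mul_assoc], h1]
  · have : (1 - ZA) * Φxe - ZB * Φue
        = (1 - ZA - ZB * 𝒦 * 𝒞) * (Φxw * ZB * 𝒦) - ZB * 𝒦 := by
      rw [hΦue, hΦxe]; simp [Matrix.sub_mul, Matrix.mul_add, Matrix.mul_assoc]; abel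
    rw [this, ← Matrix.mul_assoc, ← Matrix.mul_assoc, h1, Matrix.one_mul, sub_self]
end

section
/- The matrix Φxw is invertible (IsUnit Φxw.det), and the output-feedback gain matrix is recovered from the closed-loop response matrices by 𝒦 = Φue − Φuw * Φxw⁻¹ * Φxe. (Sufficiency direction, part 3, of the paper's Proposition 1.) -/
open Matrix

lemma strict_pow_entry {T a : ℕ} (N : Matrix (Fin T × Fin a) (Fin T × Fin a) ℝ)
    (hN : IsStrictBlockLowerTri N) :
    ∀ (k : ℕ) (t s : Fin T) (i j : Fin a), (t : ℕ) < (s : ℕ) + k → (N ^ k) (t, i) (s, j) = 0 := by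
  intro k
  induction k with
  | zero =>
    intro t s i j h
    simp only [pow_zero, Matrix.one_apply]
    rw [if_neg]
    intro he
    exact absurd (congrArg Prod.fst he) (fun hc => by simp only [Nat.add_zero] at h; exact absurd (congrArg Fin.val hc) h.ne)
  | succ k ih =>
    intro t s i j h
    rw [pow_succ, Matrix.mul_apply]
    apply Finset.sum_eq_zero
    rintro ⟨q, m⟩ _
    by_cases hq : q ≤ s
    · rw [hN q s m j hq, mul_zero]
    · push_neg at hq
      have : (t : ℕ) < (q : ℕ) + k := by omega
      rw [ih t q i m this, zero_mul]

lemma strict_nilpotent {T a : ℕ} (N : Matrix (Fin T × Fin a) (Fin T × Fin a) ℝ)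
    (hN : IsStrictBlockLowerTri N) : N ^ T = 0 := by
  ext ⟨t, i⟩ ⟨s, j⟩
  rw [strict_pow_entry N hN T t s i j (by omega)]
  rfl

theorem stmt_6 (T dx du dy : ℕ) (hT : 1 ≤ T)
    (ZA : Matrix (Fin T × Fin dx) (Fin T × Fin dx) ℝ)
    (ZB : Matrix (Fin T × Fin dx) (Fin T × Fin du) ℝ)
    (𝒞 : Matrix (Fin T × Fin dy) (Fin T × Fin dx) ℝ)
    (𝒦 : Matrix (Fin T × Fin du) (Fin T × Fin dy) ℝ)
    (hZA : IsStrictBlockLowerTri ZA) (hZB : IsStrictBlockLowerTri ZB)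
    (hC : IsBlockDiag 𝒞) (hK : IsBlockLowerTri 𝒦)
    (Φxw : Matrix (Fin T × Fin dx) (Fin T × Fin dx) ℝ)
    (Φxe : Matrix (Fin T × Fin dx) (Fin T × Fin dy) ℝ)
    (Φuw : Matrix (Fin T × Fin du) (Fin T × Fin dx) ℝ)
    (Φue : Matrix (Fin T × Fin du) (Fin T × Fin dy) ℝ)
    (hΦxw : Φxw = (1 - ZA - ZB * 𝒦 * 𝒞)⁻¹)
    (hΦxe : Φxe = Φxw * ZB * 𝒦)
    (hΦuw : Φuw = 𝒦 * 𝒞 * Φxw)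
    (hΦue : Φue = 𝒦 * 𝒞 * Φxe + 𝒦) :
    IsUnit Φxw.det ∧ 𝒦 = Φue - Φuw * Φxw⁻¹ * Φxe := by
  set N := ZA + ZB * 𝒦 * 𝒞 with hNdef
  have hN : IsStrictBlockLowerTri N := by
    intro t s i j hts
    have h2 : (ZB * 𝒦 * 𝒞) (t, i) (s, j) = 0 := by
      rw [Matrix.mul_apply]
      apply Finset.sum_eq_zero
      rintro ⟨q, l⟩ _
      by_cases hq : q = s
      · subst hq
        rw [Matrix.mul_apply, Finset.sum_eq_zero, zero_mul]
        rintro ⟨r, m⟩ _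
        by_cases hr : t ≤ r
        · rw [hZB t r i m hr, zero_mul]
        · push_neg at hr
          rw [hK r q m l (lt_of_lt_of_le hr hts), mul_zero]
      · rw [hC q s l j hq, mul_zero]
    show (ZA + ZB * 𝒦 * 𝒞) (t, i) (s, j) = 0
    rw [Matrix.add_apply, hZA t s i j hts, h2, add_zero]
  have hnil : IsNilpotent N := ⟨T, strict_nilpotent N hN⟩
  have hM : IsUnit (1 - N) := hnil.isUnit_one_sub
  have hdet : IsUnit (1 - N).det := (Matrix.isUnit_iff_isUnit_det _).mp hM
  have hP : Φxw = (1 - N)⁻¹ := by rw [hΦxw, sub_sub]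
  have hinv : Φxw⁻¹ = 1 - N := by rw [hP, Matrix.nonsing_inv_nonsing_inv _ hdet]
  have hone : Φxw * (1 - N) = 1 := by rw [hP, Matrix.nonsing_inv_mul _ hdet]
  constructor
  · rw [hP]; exact Matrix.isUnit_nonsing_inv_det _ hdet
  · have key : Φuw * Φxw⁻¹ * Φxe = 𝒦 * 𝒞 * Φxe := by
      rw [hΦuw, hinv, hΦxe]
      have hone2 : (1 - N) * Φxw = 1 := by rw [hP, Matrix.mul_nonsing_inv _ hdet]
      simp only [Matrix.mul_assoc]
      rw [← Matrix.mul_assoc (1 - N) Φxw, hone2, Matrix.one_mul]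
    rw [hΦue, key]
    abel
end

section
/- Closed-loop mapping from noise to state and input (equation (9) of the paper): suppose the vectors x w : (Fin T × Fin dx) → ℝ, u : (Fin T × Fin du) → ℝ, and y e : (Fin T × Fin dy) → ℝ satisfy the closed-loop equations x = ZA.mulVec x + ZB.mulVec u + w, y = 𝒞.mulVec x + e, and u = 𝒦.mulVec y. Then x = Φxw.mulVec w + Φxe.mulVec e and u = Φuw.mulVec w + Φue.mulVec e. -/
open Matrix

lemma mul3_strict {T dx du dy : ℕ}
    (ZB : Matrix (Fin T × Fin dx) (Fin T × Fin du) ℝ)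
    (𝒦 : Matrix (Fin T × Fin du) (Fin T × Fin dy) ℝ)
    (𝒞 : Matrix (Fin T × Fin dy) (Fin T × Fin dx) ℝ)
    (hZB : IsStrictBlockLowerTri ZB) (hK : IsBlockLowerTri 𝒦)
    (hC : IsBlockDiag 𝒞) : IsStrictBlockLowerTri (ZB * 𝒦 * 𝒞) := by
  intro t s i j hts
  rw [Matrix.mul_apply]
  apply Finset.sum_eq_zero
  rintro ⟨r, k⟩ -
  rw [Matrix.mul_apply]
  rcases lt_or_ge r t with hr | hr
  · rw [hC r s k j (ne_of_lt (lt_of_lt_of_le hr hts)), mul_zero]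
  · rw [Finset.sum_eq_zero, zero_mul]
    rintro ⟨p, q⟩ -
    rcases le_or_gt t p with hp | hp
    · rw [hZB t p i q hp, zero_mul]
    · rw [hK p r q k (lt_of_lt_of_le hp hr), mul_zero]

lemma one_sub_strict_det_isUnit {T dx : ℕ}
    (N : Matrix (Fin T × Fin dx) (Fin T × Fin dx) ℝ)
    (hN : IsStrictBlockLowerTri N) : IsUnit (1 - N).det := by
  have hbt : (1 - N).BlockTriangular (fun p => OrderDual.toDual p.1) := by
    rintro ⟨t, i⟩ ⟨s, j⟩ h
    have hts : t < s := OrderDual.toDual_lt_toDual.mp h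
    have h1 : ((1 : Matrix (Fin T × Fin dx) (Fin T × Fin dx) ℝ)) (t, i) (s, j) = 0 := by
      rw [Matrix.one_apply_ne]
      exact fun hc => absurd (congrArg Prod.fst hc) (ne_of_lt hts)
    simp [Matrix.sub_apply, h1, hN t s i j (le_of_lt hts)]
  rw [hbt.det]
  rw [Finset.prod_eq_one]
  · exact isUnit_one
  intro a _
  have : (1 - N).toSquareBlock (fun p => OrderDual.toDual p.1) a = 1 := by
    ext ⟨⟨t, i⟩, ht⟩ ⟨⟨s, j⟩, hs⟩
    have hts : t = s := by
      have := ht.trans hs.symm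
      simpa using this
    subst hts
    have hNz := hN t t i j le_rfl
    by_cases hij : i = j
    · subst hij
      simp [Matrix.toSquareBlock_def, Matrix.sub_apply, hNz, Matrix.one_apply]
    · simp [Matrix.toSquareBlock_def, Matrix.sub_apply, hNz, Matrix.one_apply, hij,
        Subtype.ext_iff, Prod.ext_iff]
  rw [this, Matrix.det_one]

theorem stmt_7 (T dx du dy : ℕ) (hT : 1 ≤ T)
    (ZA : Matrix (Fin T × Fin dx) (Fin T × Fin dx) ℝ)
    (ZB : Matrix (Fin T × Fin dx) (Fin T × Fin du) ℝ)
    (𝒞 : Matrix (Fin T × Fin dy) (Fin T × Fin dx) ℝ)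
    (𝒦 : Matrix (Fin T × Fin du) (Fin T × Fin dy) ℝ)
    (hZA : IsStrictBlockLowerTri ZA) (hZB : IsStrictBlockLowerTri ZB)
    (hC : IsBlockDiag 𝒞) (hK : IsBlockLowerTri 𝒦)
    (Φxw : Matrix (Fin T × Fin dx) (Fin T × Fin dx) ℝ)
    (Φxe : Matrix (Fin T × Fin dx) (Fin T × Fin dy) ℝ)
    (Φuw : Matrix (Fin T × Fin du) (Fin T × Fin dx) ℝ)
    (Φue : Matrix (Fin T × Fin du) (Fin T × Fin dy) ℝ)
    (hΦxw : Φxw = (1 - ZA - ZB * 𝒦 * 𝒞)⁻¹)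
    (hΦxe : Φxe = Φxw * ZB * 𝒦)
    (hΦuw : Φuw = 𝒦 * 𝒞 * Φxw)
    (hΦue : Φue = 𝒦 * 𝒞 * Φxe + 𝒦)
    (x w : (Fin T × Fin dx) → ℝ) (u : (Fin T × Fin du) → ℝ)
    (y e : (Fin T × Fin dy) → ℝ)
    (hx : x = ZA.mulVec x + ZB.mulVec u + w)
    (hy : y = 𝒞.mulVec x + e)
    (hu : u = 𝒦.mulVec y) :
    x = Φxw.mulVec w + Φxe.mulVec e ∧ u = Φuw.mulVec w + Φue.mulVec e := by
  set M : Matrix (Fin T × Fin dx) (Fin T × Fin dx) ℝ := 1 - ZA - ZB * 𝒦 * 𝒞 with hM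
  -- invertibility
  have hN : IsStrictBlockLowerTri (ZA + ZB * 𝒦 * 𝒞) := by
    intro t s i j hts
    simp [Matrix.add_apply, hZA t s i j hts, mul3_strict ZB 𝒦 𝒞 hZB hK hC t s i j hts]
  have hMdet : IsUnit M.det := by
    have : M = 1 - (ZA + ZB * 𝒦 * 𝒞) := by rw [hM, sub_sub]
    rw [this]
    exact one_sub_strict_det_isUnit _ hN
  have hinv : Φxw * M = 1 := by rw [hΦxw]; exact Matrix.nonsing_inv_mul M hMdet
  -- u in terms of x and e
  have hu' : u = (𝒦 * 𝒞).mulVec x + 𝒦.mulVec e := by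
    rw [hu, hy, Matrix.mulVec_add, Matrix.mulVec_mulVec]
  -- M x = w + ZB 𝒦 e
  have hMx : M.mulVec x = w + (ZB * 𝒦).mulVec e := by
    rw [hM]
    have : (1 - ZA - ZB * 𝒦 * 𝒞).mulVec x
        = x - ZA.mulVec x - (ZB * 𝒦 * 𝒞).mulVec x := by
      simp [Matrix.sub_mulVec]
    rw [this]
    nth_rewrite 1 [hx]
    rw [hu']
    have h2 : ZB.mulVec ((𝒦 * 𝒞).mulVec x + 𝒦.mulVec e)
        = (ZB * 𝒦 * 𝒞).mulVec x + (ZB * 𝒦).mulVec e := by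
      rw [Matrix.mulVec_add, Matrix.mulVec_mulVec, Matrix.mulVec_mulVec, Matrix.mul_assoc]
    rw [h2]
    abel
  have hxfinal : x = Φxw.mulVec w + Φxe.mulVec e := by
    have : x = Φxw.mulVec (M.mulVec x) := by
      rw [Matrix.mulVec_mulVec, hinv, Matrix.one_mulVec]
    rw [this, hMx, Matrix.mulVec_add, hΦxe, Matrix.mul_assoc]
    simp [Matrix.mulVec_mulVec]
  refine ⟨hxfinal, ?_⟩
  rw [hu', hxfinal, hΦuw, hΦue]
  rw [Matrix.mulVec_add, Matrix.mulVec_mulVec, Matrix.add_mulVec, Matrix.mulVec_mulVec]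
  abel
end

section
/- Necessity direction of the paper's Proposition 1, step 3: with 𝒦 := Φue − Φuw * Φxw⁻¹ * Φxe, one has 𝒦 * 𝒞 = Φuw * Φxw⁻¹, and equivalently Φuw = 𝒦 * 𝒞 * Φxw. -/
open Matrix

/-- Powers of a strictly block lower triangular square matrix shift the blocks. -/
lemma strict_pow_apply {T a : ℕ} (S : Matrix (Fin T × Fin a) (Fin T × Fin a) ℝ)
    (hS : IsStrictBlockLowerTri S) :
    ∀ (k : ℕ) (t s : Fin T) (i j : Fin a), (t : ℕ) < (s : ℕ) + k → (S ^ k) (t, i) (s, j) = 0 := by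
  intro k
  induction k with
  | zero =>
    intro t s i j h
    simp only [Nat.add_zero] at h
    rw [pow_zero]
    refine Matrix.one_apply_ne fun hc => ?_
    have hts : (t : ℕ) = (s : ℕ) := congrArg (fun p => ((Prod.fst p : Fin T) : ℕ)) hc
    omega
  | succ k ih =>
    intro t s i j h
    rw [pow_succ', Matrix.mul_apply]
    apply Finset.sum_eq_zero
    intro x _
    obtain ⟨r, m⟩ := x
    by_cases hr : t ≤ r
    · rw [hS t r i m hr, zero_mul]
    · have hr' : (r : ℕ) < (t : ℕ) := by
        exact Fin.lt_def.mp (lt_of_not_ge hr)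
      rw [ih r s m j (by omega), mul_zero]

/-- A strictly block lower triangular square matrix is nilpotent at exponent `T`. -/
lemma strict_pow_T {T a : ℕ} (S : Matrix (Fin T × Fin a) (Fin T × Fin a) ℝ)
    (hS : IsStrictBlockLowerTri S) : S ^ T = 0 := by
  ext ⟨t, i⟩ ⟨s, j⟩
  rw [Matrix.zero_apply]
  exact strict_pow_apply S hS T t s i j (by omega)

theorem stmt_10 (T dx du dy : ℕ) (hT : 1 ≤ T)
    (ZA : Matrix (Fin T × Fin dx) (Fin T × Fin dx) ℝ)
    (ZB : Matrix (Fin T × Fin dx) (Fin T × Fin du) ℝ)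
    (𝒞 : Matrix (Fin T × Fin dy) (Fin T × Fin dx) ℝ)
    (hZA : IsStrictBlockLowerTri ZA) (hZB : IsStrictBlockLowerTri ZB)
    (hC : IsBlockDiag 𝒞)
    (Φxw : Matrix (Fin T × Fin dx) (Fin T × Fin dx) ℝ)
    (Φxe : Matrix (Fin T × Fin dx) (Fin T × Fin dy) ℝ)
    (Φuw : Matrix (Fin T × Fin du) (Fin T × Fin dx) ℝ)
    (Φue : Matrix (Fin T × Fin du) (Fin T × Fin dy) ℝ)
    (hΦxw : IsBlockLowerTri Φxw) (hΦxe : IsBlockLowerTri Φxe)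
    (hΦuw : IsBlockLowerTri Φuw) (hΦue : IsBlockLowerTri Φue)
    (haff1 : (1 - ZA) * Φxw - ZB * Φuw = 1)
    (haff2 : (1 - ZA) * Φxe - ZB * Φue = 0)
    (haff3 : Φxw * (1 - ZA) - Φxe * 𝒞 = 1)
    (haff4 : Φuw * (1 - ZA) - Φue * 𝒞 = 0) :
    (Φue - Φuw * Φxw⁻¹ * Φxe) * 𝒞 = Φuw * Φxw⁻¹ ∧
      Φuw = (Φue - Φuw * Φxw⁻¹ * Φxe) * 𝒞 * Φxw := by
  -- Diagonal blocks of Φxw are identity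
  have hdiag : ∀ (t : Fin T) (i j : Fin dx),
      Φxw (t, i) (t, j) = (1 : Matrix (Fin T × Fin dx) (Fin T × Fin dx) ℝ) (t, i) (t, j) := by
    intro t i j
    have h1 : Φxw = 1 + ZA * Φxw + ZB * Φuw := by
      have := haff1
      rw [sub_mul, one_mul] at this
      linear_combination (norm := noncomm_ring) this
    have hZAzero : (ZA * Φxw) (t, i) (t, j) = 0 := by
      rw [Matrix.mul_apply]
      apply Finset.sum_eq_zero
      rintro ⟨s, k⟩ _
      by_cases hs : t ≤ s
      · rw [hZA t s i k hs, zero_mul]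
      · rw [hΦxw s t k j (lt_of_not_ge hs), mul_zero]
    have hZBzero : (ZB * Φuw) (t, i) (t, j) = 0 := by
      rw [Matrix.mul_apply]
      apply Finset.sum_eq_zero
      rintro ⟨s, k⟩ _
      by_cases hs : t ≤ s
      · rw [hZB t s i k hs, zero_mul]
      · rw [hΦuw s t k j (lt_of_not_ge hs), mul_zero]
    have e := congrFun (congrFun h1 (t, i)) (t, j)
    rw [Matrix.add_apply, Matrix.add_apply, hZAzero, hZBzero, add_zero, add_zero] at e
    exact e
  -- S := Φxw - 1 is strictly block lower triangular
  set S : Matrix (Fin T × Fin dx) (Fin T × Fin dx) ℝ := Φxw - 1 with hSdef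
  have hSstrict : IsStrictBlockLowerTri S := by
    intro t s i j hts
    rcases lt_or_eq_of_le hts with h | h
    · have h1 : Φxw (t, i) (s, j) = 0 := hΦxw t s i j h
      have h2 : (1 : Matrix (Fin T × Fin dx) (Fin T × Fin dx) ℝ) (t, i) (s, j) = 0 := by
        apply Matrix.one_apply_ne
        intro hc
        rw [Prod.mk.injEq] at hc
        exact absurd hc.1 (ne_of_lt h)
      simp [hSdef, Matrix.sub_apply, h1, h2]
    · subst h
      simp [hSdef, Matrix.sub_apply, hdiag t i j]
  have hSnil : S ^ T = 0 := strict_pow_T S hSstrict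
  -- B is a two-sided inverse of Φxw
  set B : Matrix (Fin T × Fin dx) (Fin T × Fin dx) ℝ :=
    ∑ k ∈ Finset.range T, (-S) ^ k with hBdef
  have hBleft : B * Φxw = 1 := by
    have hg : B * ((-S) - 1) = (-S) ^ T - 1 := geom_sum_mul (-S) T
    have hST : (-S) ^ T = 0 := by
      rw [neg_pow, hSnil, mul_zero]
    rw [hST, zero_sub] at hg
    have hΦ : Φxw = 1 - (-S) := by
      simp [hSdef]
    rw [hΦ]
    calc B * (1 - -S) = -(B * ((-S) - 1)) := by noncomm_ring
      _ = 1 := by rw [hg, neg_neg]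
  have hBright : Φxw * B = 1 := (mul_eq_one_comm).mpr hBleft
  have hinvB : Φxw⁻¹ = B := Matrix.inv_eq_left_inv hBleft
  have hinv : Φxw⁻¹ * Φxw = 1 := by rw [hinvB]; exact hBleft
  -- Rearranged affine constraints
  have h4 : Φue * 𝒞 = Φuw * (1 - ZA) := by
    rw [sub_eq_zero] at haff4
    exact haff4.symm
  have h3 : Φxe * 𝒞 = Φxw * (1 - ZA) - 1 := by
    rw [sub_eq_iff_eq_add.mp haff3, add_sub_cancel_left]
  have key : Φuw * Φxw⁻¹ * (Φxe * 𝒞) = Φuw * (1 - ZA) - Φuw * Φxw⁻¹ := by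
    rw [h3, Matrix.mul_sub, Matrix.mul_one, Matrix.mul_assoc Φuw Φxw⁻¹ (Φxw * (1 - ZA)),
      ← Matrix.mul_assoc Φxw⁻¹ Φxw (1 - ZA), hinv, Matrix.one_mul]
  have goal1 : (Φue - Φuw * Φxw⁻¹ * Φxe) * 𝒞 = Φuw * Φxw⁻¹ := by
    rw [Matrix.sub_mul, h4, Matrix.mul_assoc (Φuw * Φxw⁻¹) Φxe 𝒞, key, sub_sub_cancel]
  refine ⟨goal1, ?_⟩
  rw [goal1, Matrix.mul_assoc, hinv, Matrix.mul_one]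
end

section
/- Necessity direction of the paper's Proposition 1, step 4: with 𝒦 := Φue − Φuw * Φxw⁻¹ * Φxe, one has (1 − ZA − ZB * 𝒦 * 𝒞) * Φxw = 1; consequently 1 − ZA − ZB * 𝒦 * 𝒞 is invertible and Φxw = (1 − ZA − ZB * 𝒦 * 𝒞)⁻¹. -/
open Matrix

/-!
`(1 - ZA) * Φxw = 1 + ZB * Φuw`, and `ZB * Φuw` is strictly block lower triangular, hence nilpotent,
so `Φxw` is invertible. The last two affine constraints then give `𝒦 * 𝒞 = Φuw * Φxw⁻¹`, whence
`(1 - ZA - ZB * 𝒦 * 𝒞) * Φxw = (1 - ZA) * Φxw - ZB * Φuw = 1`.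
-/

section BlockTriangular

variable {T a b c : ℕ}

theorem IsStrictBlockLowerTri.mul_isBlockLowerTri
    {M : Matrix (Fin T × Fin a) (Fin T × Fin b) ℝ} {N : Matrix (Fin T × Fin b) (Fin T × Fin c) ℝ}
    (hM : IsStrictBlockLowerTri M) (hN : IsBlockLowerTri N) :
    IsStrictBlockLowerTri (M * N) := by
  intro t s i j hts
  rw [mul_apply]
  refine Finset.sum_eq_zero fun ⟨r, m⟩ _ => ?_
  rcases le_or_gt t r with htr | hrt
  · rw [hM t r i m htr, zero_mul]
  · rw [hN r s m j (hrt.trans_le hts), mul_zero]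

theorem IsStrictBlockLowerTri.pow_apply_eq_zero {N : Matrix (Fin T × Fin a) (Fin T × Fin a) ℝ}
    (hN : IsStrictBlockLowerTri N) (k : ℕ) {t s : Fin T} (i j : Fin a)
    (hts : (t : ℕ) < s + k) : (N ^ k) (t, i) (s, j) = 0 := by
  induction k generalizing t i with
  | zero =>
    exact one_apply_ne fun h => by simp only [Prod.mk.injEq] at h; omega
  | succ k ih =>
    rw [pow_succ', mul_apply]
    refine Finset.sum_eq_zero fun ⟨r, m⟩ _ => ?_
    rcases le_or_gt t r with htr | hrt
    · rw [hN t r i m htr, zero_mul]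
    · rw [ih m (by omega), mul_zero]

theorem IsStrictBlockLowerTri.isNilpotent {N : Matrix (Fin T × Fin a) (Fin T × Fin a) ℝ}
    (hN : IsStrictBlockLowerTri N) : IsNilpotent N :=
  ⟨T, by ext ⟨t, i⟩ ⟨s, j⟩; exact hN.pow_apply_eq_zero T i j (by omega)⟩

end BlockTriangular

section ClosedLoop

variable {R nx nu ny : Type*} [CommRing R] [Fintype nx] [DecidableEq nx] [Fintype ny]

theorem isUnit_det_of_mul_eq_one_add_isNilpotent {A X N : Matrix nx nx R} (hN : IsNilpotent N)
    (h : A * X = 1 + N) : IsUnit X.det := by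
  have hAX : IsUnit (A * X).det := (isUnit_iff_isUnit_det _).mp (h ▸ hN.isUnit_one_add)
  rw [det_mul] at hAX
  exact isUnit_of_mul_isUnit_right hAX

theorem sls_controller_mul_eq (ZA : Matrix nx nx R) (C : Matrix ny nx R)
    {Φxw : Matrix nx nx R} (Φxe : Matrix nx ny R) (Φuw : Matrix nu nx R) (Φue : Matrix nu ny R)
    (hΦxw : IsUnit Φxw.det)
    (hx : Φxw * (1 - ZA) - Φxe * C = 1) (hu : Φuw * (1 - ZA) - Φue * C = 0) :
    (Φue - Φuw * Φxw⁻¹ * Φxe) * C = Φuw * Φxw⁻¹ := by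
  have hxe : Φxe * C = Φxw * (1 - ZA) - 1 := eq_sub_of_add_eq (sub_eq_iff_eq_add'.mp hx).symm
  have hue : Φue * C = Φuw * (1 - ZA) := (sub_eq_zero.mp hu).symm
  rw [Matrix.sub_mul, hue, Matrix.mul_assoc _ Φxe, hxe, Matrix.mul_sub (Φuw * Φxw⁻¹),
    Matrix.mul_one, ← Matrix.mul_assoc (Φuw * Φxw⁻¹) Φxw, Matrix.mul_assoc Φuw Φxw⁻¹ Φxw,
    nonsing_inv_mul _ hΦxw, Matrix.mul_one, sub_sub_cancel]

theorem sls_closedLoop_mul_eq_one [Fintype nu] (ZA : Matrix nx nx R) (ZB : Matrix nx nu R)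
    (C : Matrix ny nx R) {Φxw : Matrix nx nx R} (Φxe : Matrix nx ny R) (Φuw : Matrix nu nx R)
    (Φue : Matrix nu ny R) (hΦxw : IsUnit Φxw.det)
    (hw : (1 - ZA) * Φxw - ZB * Φuw = 1)
    (hx : Φxw * (1 - ZA) - Φxe * C = 1) (hu : Φuw * (1 - ZA) - Φue * C = 0) :
    (1 - ZA - ZB * (Φue - Φuw * Φxw⁻¹ * Φxe) * C) * Φxw = 1 := by
  rw [Matrix.sub_mul, Matrix.mul_assoc ZB, sls_controller_mul_eq ZA C Φxe Φuw Φue hΦxw hx hu,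
    Matrix.mul_assoc ZB, Matrix.mul_assoc Φuw, nonsing_inv_mul _ hΦxw, Matrix.mul_one, hw]

end ClosedLoop

theorem stmt_11_general (T dx du dy : ℕ)
    (ZA : Matrix (Fin T × Fin dx) (Fin T × Fin dx) ℝ)
    (ZB : Matrix (Fin T × Fin dx) (Fin T × Fin du) ℝ)
    (𝒞 : Matrix (Fin T × Fin dy) (Fin T × Fin dx) ℝ)
    (hZB : IsStrictBlockLowerTri ZB)
    (Φxw : Matrix (Fin T × Fin dx) (Fin T × Fin dx) ℝ)
    (Φxe : Matrix (Fin T × Fin dx) (Fin T × Fin dy) ℝ)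
    (Φuw : Matrix (Fin T × Fin du) (Fin T × Fin dx) ℝ)
    (Φue : Matrix (Fin T × Fin du) (Fin T × Fin dy) ℝ)
    (hΦuw : IsBlockLowerTri Φuw)
    (haff1 : (1 - ZA) * Φxw - ZB * Φuw = 1)
    (haff3 : Φxw * (1 - ZA) - Φxe * 𝒞 = 1)
    (haff4 : Φuw * (1 - ZA) - Φue * 𝒞 = 0) :
    (1 - ZA - ZB * (Φue - Φuw * Φxw⁻¹ * Φxe) * 𝒞) * Φxw = 1 ∧
      IsUnit (1 - ZA - ZB * (Φue - Φuw * Φxw⁻¹ * Φxe) * 𝒞).det ∧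
      Φxw = (1 - ZA - ZB * (Φue - Φuw * Φxw⁻¹ * Φxe) * 𝒞)⁻¹ := by
  have hΦxw : IsUnit Φxw.det :=
    isUnit_det_of_mul_eq_one_add_isNilpotent (hZB.mul_isBlockLowerTri hΦuw).isNilpotent
      (sub_eq_iff_eq_add.mp haff1)
  have hloop := sls_closedLoop_mul_eq_one ZA ZB 𝒞 Φxe Φuw Φue hΦxw haff1 haff3 haff4
  exact ⟨hloop, isUnit_det_of_right_inverse hloop, (inv_eq_right_inv hloop).symm⟩

theorem stmt_11 (T dx du dy : ℕ) (hT : 1 ≤ T)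
    (ZA : Matrix (Fin T × Fin dx) (Fin T × Fin dx) ℝ)
    (ZB : Matrix (Fin T × Fin dx) (Fin T × Fin du) ℝ)
    (𝒞 : Matrix (Fin T × Fin dy) (Fin T × Fin dx) ℝ)
    (hZA : IsStrictBlockLowerTri ZA) (hZB : IsStrictBlockLowerTri ZB)
    (hC : IsBlockDiag 𝒞)
    (Φxw : Matrix (Fin T × Fin dx) (Fin T × Fin dx) ℝ)
    (Φxe : Matrix (Fin T × Fin dx) (Fin T × Fin dy) ℝ)
    (Φuw : Matrix (Fin T × Fin du) (Fin T × Fin dx) ℝ)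
    (Φue : Matrix (Fin T × Fin du) (Fin T × Fin dy) ℝ)
    (hΦxw : IsBlockLowerTri Φxw) (hΦxe : IsBlockLowerTri Φxe)
    (hΦuw : IsBlockLowerTri Φuw) (hΦue : IsBlockLowerTri Φue)
    (haff1 : (1 - ZA) * Φxw - ZB * Φuw = 1)
    (haff2 : (1 - ZA) * Φxe - ZB * Φue = 0)
    (haff3 : Φxw * (1 - ZA) - Φxe * 𝒞 = 1)
    (haff4 : Φuw * (1 - ZA) - Φue * 𝒞 = 0) :
    (1 - ZA - ZB * (Φue - Φuw * Φxw⁻¹ * Φxe) * 𝒞) * Φxw = 1 ∧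
      IsUnit (1 - ZA - ZB * (Φue - Φuw * Φxw⁻¹ * Φxe) * 𝒞).det ∧
      Φxw = (1 - ZA - ZB * (Φue - Φuw * Φxw⁻¹ * Φxe) * 𝒞)⁻¹ :=
  stmt_11_general T dx du dy ZA ZB 𝒞 hZB Φxw Φxe Φuw Φue hΦuw haff1 haff3 haff4
end

section
/- Necessity direction of the paper's Proposition 1, step 5: with 𝒦 := Φue − Φuw * Φxw⁻¹ * Φxe, one has Φue = 𝒦 * 𝒞 * Φxe + 𝒦 and Φxe = Φxw * ZB * 𝒦. -/
open Matrix

theorem stmt_12 (T dx du dy : ℕ) (hT : 1 ≤ T)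
    (ZA : Matrix (Fin T × Fin dx) (Fin T × Fin dx) ℝ)
    (ZB : Matrix (Fin T × Fin dx) (Fin T × Fin du) ℝ)
    (𝒞 : Matrix (Fin T × Fin dy) (Fin T × Fin dx) ℝ)
    (hZA : IsStrictBlockLowerTri ZA) (hZB : IsStrictBlockLowerTri ZB)
    (hC : IsBlockDiag 𝒞)
    (Φxw : Matrix (Fin T × Fin dx) (Fin T × Fin dx) ℝ)
    (Φxe : Matrix (Fin T × Fin dx) (Fin T × Fin dy) ℝ)
    (Φuw : Matrix (Fin T × Fin du) (Fin T × Fin dx) ℝ)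
    (Φue : Matrix (Fin T × Fin du) (Fin T × Fin dy) ℝ)
    (hΦxw : IsBlockLowerTri Φxw) (hΦxe : IsBlockLowerTri Φxe)
    (hΦuw : IsBlockLowerTri Φuw) (hΦue : IsBlockLowerTri Φue)
    (haff1 : (1 - ZA) * Φxw - ZB * Φuw = 1)
    (haff2 : (1 - ZA) * Φxe - ZB * Φue = 0)
    (haff3 : Φxw * (1 - ZA) - Φxe * 𝒞 = 1)
    (haff4 : Φuw * (1 - ZA) - Φue * 𝒞 = 0) :
    Φue = (Φue - Φuw * Φxw⁻¹ * Φxe) * 𝒞 * Φxe + (Φue - Φuw * Φxw⁻¹ * Φxe) ∧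
      Φxe = Φxw * ZB * (Φue - Φuw * Φxw⁻¹ * Φxe) := by
  -- diagonal blocks of Φxw are the identity
  have hdiag : ∀ (t : Fin T) (i j : Fin dx),
      Φxw (t, i) (t, j) = if i = j then 1 else 0 := by
    intro t i j
    have h := congrFun (congrFun haff1 (t, i)) (t, j)
    simp only [Matrix.sub_apply, Matrix.mul_apply, Matrix.one_apply] at h
    have h1 : ∑ x : Fin T × Fin dx, ((if (t, i) = x then (1:ℝ) else 0) - ZA (t, i) x)
        * Φxw x (t, j) = Φxw (t, i) (t, j) := by
      rw [Finset.sum_eq_single (t, i)]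
      · simp [hZA t t i i le_rfl]
      · rintro ⟨s, k⟩ _ hx
        rcases lt_trichotomy t s with hlt | heq | hgt
        · have hz : ZA (t, i) (s, k) = 0 := hZA t s i k hlt.le
          have ho : (if (t, i) = ((s, k) : Fin T × Fin dx) then (1:ℝ) else 0) = 0 := by
            simp only [ite_eq_right_iff, Prod.mk.injEq]
            rintro ⟨rfl, rfl⟩; exact absurd rfl hlt.ne
          rw [hz, ho]; ring
        · subst heq
          have hz : ZA (t, i) (t, k) = 0 := hZA t t i k le_rfl
          have ho : (if (t, i) = ((t, k) : Fin T × Fin dx) then (1:ℝ) else 0) = 0 := by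
            simp only [ite_eq_right_iff, Prod.mk.injEq]
            rintro ⟨-, rfl⟩; exact absurd rfl hx
          rw [hz, ho]; ring
        · have hw : Φxw (s, k) (t, j) = 0 := hΦxw s t k j hgt
          rw [hw]; ring
      · simp
    have h2 : ∑ x : Fin T × Fin du, ZB (t, i) x * Φuw x (t, j) = 0 := by
      apply Finset.sum_eq_zero
      rintro ⟨s, k⟩ -
      rcases le_or_gt t s with hle | hgt
      · rw [hZB t s i k hle]; ring
      · rw [hΦuw s t k j hgt]; ring
    rw [h1, h2] at h
    simpa [Prod.ext_iff] using h
  -- Φxw is invertible with det 1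
  have hBT : (Φxwᵀ).BlockTriangular Prod.fst := by
    rintro ⟨s, k⟩ ⟨t, j⟩ hlt
    exact hΦxw t s j k hlt
  have hdet : Φxw.det = 1 := by
    rw [← Matrix.det_transpose, hBT.det]
    apply Finset.prod_eq_one
    intro t _
    have hb : Φxwᵀ.toSquareBlock Prod.fst t = 1 := by
      ext p q
      obtain ⟨⟨s₁, i⟩, hp⟩ := p
      obtain ⟨⟨s₂, j⟩, hq⟩ := q
      simp only at hp hq
      subst hp; subst hq
      simp [Matrix.toSquareBlock_def, Matrix.one_apply, hdiag, Matrix.transpose_apply,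
        Subtype.ext_iff, Prod.ext_iff, eq_comm]
    rw [hb, Matrix.det_one]
  have hu : IsUnit Φxw.det := by rw [hdet]; exact isUnit_one
  have hinv1 : Φxw * Φxw⁻¹ = 1 := Matrix.mul_nonsing_inv _ hu
  have hinv2 : Φxw⁻¹ * Φxw = 1 := Matrix.nonsing_inv_mul _ hu
  -- algebraic identities
  have hb2 : ZB * Φue = (1 - ZA) * Φxe := (sub_eq_zero.mp haff2).symm
  have hc2 : ZB * Φuw = (1 - ZA) * Φxw - 1 := by
    have h := sub_eq_iff_eq_add.mp haff1
    rw [h]; abel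
  have hd2 : Φxe * 𝒞 = Φxw * (1 - ZA) - 1 := by
    have h := sub_eq_iff_eq_add.mp haff3
    rw [h]; abel
  have he2 : Φuw * (1 - ZA) = Φue * 𝒞 := sub_eq_zero.mp haff4
  constructor
  · have key : (Φue - Φuw * Φxw⁻¹ * Φxe) * 𝒞 * Φxe + (Φue - Φuw * Φxw⁻¹ * Φxe)
        = (Φue * 𝒞) * Φxe - Φuw * Φxw⁻¹ * ((Φxe * 𝒞) * Φxe) + Φue
          - Φuw * Φxw⁻¹ * Φxe := by
      (try simp only [Matrix.mul_sub, Matrix.sub_mul, Matrix.mul_one, Matrix.one_mul, Matrix.mul_assoc]); try abel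
    rw [key, hd2, ← he2]
    have e1 : Φuw * Φxw⁻¹ * ((Φxw * (1 - ZA) - 1) * Φxe)
        = Φuw * (Φxw⁻¹ * Φxw) * ((1 - ZA) * Φxe) - Φuw * Φxw⁻¹ * Φxe := by
      (try simp only [Matrix.mul_sub, Matrix.sub_mul, Matrix.mul_one, Matrix.one_mul, Matrix.mul_assoc]); try abel
    rw [e1, hinv2]
    (try simp only [Matrix.mul_sub, Matrix.sub_mul, Matrix.mul_one, Matrix.one_mul, Matrix.mul_assoc]); try abel
  · have key : Φxw * ZB * (Φue - Φuw * Φxw⁻¹ * Φxe)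
        = Φxw * (ZB * Φue) - Φxw * (ZB * Φuw) * (Φxw⁻¹ * Φxe) := by
      (try simp only [Matrix.mul_sub, Matrix.sub_mul, Matrix.mul_one, Matrix.one_mul, Matrix.mul_assoc]); try abel
    rw [key, hb2, hc2]
    have e1 : Φxw * ((1 - ZA) * Φxw - 1) * (Φxw⁻¹ * Φxe)
        = Φxw * (1 - ZA) * (Φxw * Φxw⁻¹) * Φxe - (Φxw * Φxw⁻¹) * Φxe := by
      (try simp only [Matrix.mul_sub, Matrix.sub_mul, Matrix.mul_one, Matrix.one_mul, Matrix.mul_assoc]); try abel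
    rw [e1, hinv1]
    (try simp only [Matrix.mul_sub, Matrix.sub_mul, Matrix.mul_one, Matrix.one_mul, Matrix.mul_assoc]); try abel
end

section
/- Dualization of the robust polytopic safety constraints (used in the paper's Theorem 1, following the dualization of robust linear constraints): let m n p : ℕ, let G : Matrix (Fin m) (Fin n) ℝ, F : Matrix (Fin p) (Fin n) ℝ, h : Fin m → ℝ, f : Fin p → ℝ, and suppose the polytope P = {ν : Fin n → ℝ | F.mulVec ν ≤ f componentwise} is nonempty and bounded. Then the following are equivalent: (i) for every ν ∈ P, G.mulVec ν ≤ h componentwise; (ii) there exists Z : Matrix (Fin p) (Fin m) ℝ with 0 ≤ Z i j for all i j, Zᵀ.mulVec f ≤ h componentwise, and G = Zᵀ * F. -/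
/-!
Each safety constraint `G j ⬝ᵥ ν ≤ h j` holding on the polyhedron `{ν | F *ᵥ ν ≤ f}` is an
affine consequence of its defining inequalities, so by the affine Farkas lemma it is a
nonnegative combination `z j` of them; stacking the rows `z j` gives `Z`. The affine Farkas lemma
follows from the homogeneous one applied to the homogenized system `(F | f)`, and the homogeneous
one is hyperplane separation from the conic hull of the rows, which is closed because, by
Carathéodory's theorem for cones, it is a finite union of images of orthants under injective
linear maps.
-/

open Matrix

section Caratheodory

variable {κ E : Type*} [AddCommGroup E] [Module ℝ E]

lemma exists_nonneg_sum_smul_erase_eq [DecidableEq κ] (v : κ → E) {s : Finset κ} {c g : κ → ℝ}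
    (hc : ∀ i ∈ s, 0 ≤ c i) (hg : ∑ i ∈ s, g i • v i = 0) {j : κ} (hj : j ∈ s)
    (hgj : 0 < g j) :
    ∃ i ∈ s, ∃ c' : κ → ℝ, (∀ k ∈ s.erase i, 0 ≤ c' k) ∧
      ∑ k ∈ s.erase i, c' k • v k = ∑ k ∈ s, c k • v k := by
  obtain ⟨i, hi, hmin⟩ := (s.filter (0 < g ·)).exists_min_image (fun k => c k / g k)
    ⟨j, Finset.mem_filter.2 ⟨hj, hgj⟩⟩
  rw [Finset.mem_filter] at hi
  -- the largest step keeping `c - τ • g` nonnegative on `s`; it kills the coefficient at `i`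
  set τ := c i / g i
  have hτ : 0 ≤ τ := div_nonneg (hc i hi.1) hi.2.le
  refine ⟨i, hi.1, fun k => c k - τ * g k, fun k hk => ?_, ?_⟩
  · have hks := Finset.mem_of_mem_erase hk
    rcases lt_or_ge 0 (g k) with hgk | hgk
    · have := (le_div_iff₀ hgk).1 (hmin k (Finset.mem_filter.2 ⟨hks, hgk⟩))
      linarith
    · nlinarith [hc k hks]
  · rw [Finset.sum_erase s (by simp [τ, div_mul_cancel₀ _ hi.2.ne'])]
    simp only [sub_smul, mul_smul, Finset.sum_sub_distrib, ← Finset.smul_sum, hg, smul_zero,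
      sub_zero]

theorem exists_linearIndepOn_subset_sum_smul_eq (v : κ → E) (s : Finset κ) (c : κ → ℝ)
    (hc : ∀ i ∈ s, 0 ≤ c i) :
    ∃ t ⊆ s, LinearIndepOn ℝ v (t : Set κ) ∧ ∃ c' : κ → ℝ, (∀ i ∈ t, 0 ≤ c' i) ∧
      ∑ i ∈ t, c' i • v i = ∑ i ∈ s, c i • v i := by
  classical
  induction s using Finset.strongInduction generalizing c with
  | H s ih =>
  by_cases hli : LinearIndepOn ℝ v (s : Set κ)
  · exact ⟨s, subset_rfl, hli, c, hc, rfl⟩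
  obtain ⟨g, hg, j, hj, hgj⟩ := not_linearIndepOn_finset_iff.1 hli
  obtain ⟨i, hi, c', hc', hsum⟩ : ∃ i ∈ s, ∃ c' : κ → ℝ, (∀ k ∈ s.erase i, 0 ≤ c' k) ∧
      ∑ k ∈ s.erase i, c' k • v k = ∑ k ∈ s, c k • v k := by
    rcases hgj.lt_or_gt with hneg | hpos
    · exact exists_nonneg_sum_smul_erase_eq v hc (g := -g) (by simp [neg_smul, hg]) hj
        (neg_pos.2 hneg)
    · exact exists_nonneg_sum_smul_erase_eq v hc hg hj hpos
  obtain ⟨t, hts, htli, c'', hc'', hsum'⟩ := ih _ (Finset.erase_ssubset hi) c' hc'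
  exact ⟨t, hts.trans (Finset.erase_subset _ _), htli, c'', hc'', hsum'.trans hsum⟩

end Caratheodory

namespace PointedCone

variable {κ E : Type*} [Fintype κ] [AddCommGroup E] [Module ℝ E]

lemma mem_hull_range_iff (v : κ → E) (x : E) :
    x ∈ hull ℝ (Set.range v) ↔ ∃ c : κ → ℝ, 0 ≤ c ∧ ∑ i, c i • v i = x := by
  rw [Submodule.mem_span_range_iff_exists_fun]
  constructor
  · rintro ⟨c, rfl⟩
    exact ⟨fun i => c i, fun i => (c i).2, rfl⟩
  · rintro ⟨c, hc, rfl⟩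
    exact ⟨fun i => ⟨c i, hc i⟩, rfl⟩

variable [TopologicalSpace E] [IsTopologicalAddGroup E] [ContinuousSMul ℝ E] [T2Space E]

theorem isClosed_hull_range (v : κ → E) :
    IsClosed (hull ℝ (Set.range v) : Set E) := by
  classical
  have hunion : (hull ℝ (Set.range v) : Set E) =
      ⋃ (t : Finset κ) (_ : LinearIndepOn ℝ v (t : Set κ)),
        Fintype.linearCombination ℝ (fun i : t => v i) '' Set.Ici 0 := by
    refine subset_antisymm (fun x hx => ?_) <| Set.iUnion₂_subset fun t _ => ?_
    · obtain ⟨c, hc, rfl⟩ := (mem_hull_range_iff v x).1 hx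
      obtain ⟨t, -, hli, c', hc', hsum⟩ :=
        exists_linearIndepOn_subset_sum_smul_eq v Finset.univ c fun i _ => hc i
      refine Set.mem_iUnion₂.2 ⟨t, hli, fun i => c' i, fun i => hc' i i.2, ?_⟩
      rw [Fintype.linearCombination_apply, Finset.sum_coe_sort t fun i => c' i • v i, hsum]
    · rintro _ ⟨d, hd, rfl⟩
      rw [Fintype.linearCombination_apply]
      exact Submodule.sum_mem _ fun i _ => smul_mem _ (hd i) (subset_hull ⟨i, rfl⟩)
  rw [hunion]
  refine isClosed_iUnion_of_finite fun t => isClosed_iUnion_of_finite fun hli => ?_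
  exact (LinearMap.isClosedEmbedding_of_injective (LinearMap.ker_eq_bot.2
    (linearIndependent_iff_injective_fintypeLinearCombination.1 hli))).isClosedMap _ isClosed_Ici

variable [LocallyConvexSpace ℝ E]

theorem mem_hull_range_of_forall_nonneg (v : κ → E) {b : E}
    (H : ∀ φ : StrongDual ℝ E, (∀ i, 0 ≤ φ (v i)) → 0 ≤ φ b) :
    b ∈ hull ℝ (Set.range v) := by
  by_contra hb
  obtain ⟨φ, hφ, hφb⟩ := ProperCone.hyperplane_separation_point
    ⟨hull ℝ (Set.range v), isClosed_hull_range v⟩ hb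
  exact hφb.not_ge (H φ fun i => hφ _ (subset_hull ⟨i, rfl⟩))

end PointedCone

namespace Matrix

lemma mulVec_le_mulVec_of_nonneg {m n α : Type*} [Fintype n] [Semiring α] [PartialOrder α]
    [IsOrderedRing α] {A : Matrix m n α} (hA : ∀ i j, 0 ≤ A i j) {x y : n → α} (hxy : x ≤ y) :
    A *ᵥ x ≤ A *ᵥ y := fun i =>
  Finset.sum_le_sum fun j _ => mul_le_mul_of_nonneg_left (hxy j) (hA i j)

variable {κ ι : Type*} [Fintype ι]

theorem exists_nonneg_vecMul_eq_of_forall_mulVec_nonneg [Fintype κ] (A : Matrix κ ι ℝ) {b : ι → ℝ}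
    (H : ∀ y, 0 ≤ A *ᵥ y → 0 ≤ b ⬝ᵥ y) : ∃ c, 0 ≤ c ∧ c ᵥ* A = b := by
  classical
  obtain ⟨c, hc, hcb⟩ := (PointedCone.mem_hull_range_iff A b).1 <|
    PointedCone.mem_hull_range_of_forall_nonneg A fun φ hφ => by
      have hy : ∀ x, φ x = x ⬝ᵥ fun k => φ (Pi.single k 1) := fun x => by
        conv_lhs => rw [pi_eq_sum_univ' x]
        simp [dotProduct]
      rw [hy]
      exact H _ fun i => (hφ i).trans_eq (hy (A i))
  exact ⟨c, hc, by rw [vecMul_eq_sum, hcb]⟩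

variable {F : Matrix κ ι ℝ} {f : κ → ℝ} {g : ι → ℝ} {c : ℝ}

lemma dotProduct_nonneg_of_mulVec_nonneg (hne : ∃ ν, F *ᵥ ν ≤ f)
    (H : ∀ ν, F *ᵥ ν ≤ f → g ⬝ᵥ ν ≤ c) {w : ι → ℝ} (hw : 0 ≤ F *ᵥ w) : 0 ≤ g ⬝ᵥ w := by
  obtain ⟨ν, hν⟩ := hne
  by_contra! hgw
  have hray : ∀ s : ℝ, 0 ≤ s → g ⬝ᵥ ν - s * g ⬝ᵥ w ≤ c := fun s hs => by
    have hfeas : F *ᵥ (ν - s • w) ≤ f := by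
      rw [mulVec_sub, mulVec_smul]
      exact (sub_le_self _ (smul_nonneg hs hw)).trans hν
    simpa [dotProduct_sub, dotProduct_smul] using H _ hfeas
  have hs : 0 ≤ (|c - g ⬝ᵥ ν| + 1) / -(g ⬝ᵥ w) := by
    have := neg_pos.2 hgw
    positivity
  have hmul : (|c - g ⬝ᵥ ν| + 1) / -(g ⬝ᵥ w) * g ⬝ᵥ w = -(|c - g ⬝ᵥ ν| + 1) := by
    rw [div_neg, neg_mul, div_mul_cancel₀ _ hgw.ne]
  linarith [hray _ hs, le_abs_self (c - g ⬝ᵥ ν)]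

lemma nonneg_add_dotProduct_of_nonneg_add_mulVec (hne : ∃ ν, F *ᵥ ν ≤ f)
    (H : ∀ ν, F *ᵥ ν ≤ f → g ⬝ᵥ ν ≤ c) {w : ι → ℝ} {τ : ℝ} (hτ : 0 ≤ τ)
    (hw : ∀ i, 0 ≤ f i * τ + (F *ᵥ w) i) : 0 ≤ c * τ + g ⬝ᵥ w := by
  rcases hτ.eq_or_lt with rfl | hτ
  · simpa using dotProduct_nonneg_of_mulVec_nonneg hne H fun i => by simpa using hw i
  · have hfeas : F *ᵥ -(τ⁻¹ • w) ≤ f := fun i => by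
      rw [mulVec_neg, mulVec_smul, Pi.neg_apply, Pi.smul_apply, smul_eq_mul, neg_le,
        ← div_eq_inv_mul, le_div_iff₀ hτ]
      linarith [hw i]
    have := H _ hfeas
    rw [dotProduct_neg, dotProduct_smul, smul_eq_mul, neg_le, ← div_eq_inv_mul,
      le_div_iff₀ hτ] at this
    linarith

theorem exists_nonneg_vecMul_eq_dotProduct_le [Fintype κ] (hne : ∃ ν, F *ᵥ ν ≤ f)
    (H : ∀ ν, F *ᵥ ν ≤ f → g ⬝ᵥ ν ≤ c) : ∃ z, 0 ≤ z ∧ z ᵥ* F = g ∧ z ⬝ᵥ f ≤ c := by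
  -- rows `(f i, F i)` and `(1, 0)`, the extra coordinate `none` carrying the right-hand side
  let A : Matrix (Option κ) (Option ι) ℝ :=
    of fun r o => r.elim (o.elim 1 0) fun i => o.elim (f i) (F i)
  obtain ⟨z, hz, hzA⟩ := exists_nonneg_vecMul_eq_of_forall_mulVec_nonneg A
    (b := fun o => o.elim c g) fun y hy => by
      have hτ : 0 ≤ y none := by simpa [A, mulVec, dotProduct, Fintype.sum_option] using hy none
      have hw : ∀ i, 0 ≤ f i * y none + (F *ᵥ (y ∘ some)) i := fun i => by
        simpa [A, mulVec, dotProduct, Fintype.sum_option] using hy (some i)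
      simpa [dotProduct, Fintype.sum_option] using
        nonneg_add_dotProduct_of_nonneg_add_mulVec hne H hτ hw
  refine ⟨z ∘ some, fun i => hz _, funext fun k => ?_, ?_⟩
  · have := congrFun hzA (some k)
    simpa [A, vecMul, dotProduct, Fintype.sum_option] using this
  · have := congrFun hzA none
    simp only [A, vecMul, dotProduct, of_apply, Option.elim_none, Option.elim_some,
      Fintype.sum_option, mul_one] at this
    simp only [dotProduct, Function.comp_apply]
    linarith [show (0 : ℝ) ≤ z none from hz none]

end Matrix

theorem stmt_17_general (m n p : ℕ)
    (G : Matrix (Fin m) (Fin n) ℝ) (F : Matrix (Fin p) (Fin n) ℝ)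
    (h : Fin m → ℝ) (f : Fin p → ℝ)
    (hne : {ν : Fin n → ℝ | F.mulVec ν ≤ f}.Nonempty) :
    (∀ ν : Fin n → ℝ, F.mulVec ν ≤ f → G.mulVec ν ≤ h) ↔
      ∃ Z : Matrix (Fin p) (Fin m) ℝ,
        (∀ i j, 0 ≤ Z i j) ∧ Zᵀ.mulVec f ≤ h ∧ G = Zᵀ * F := by
  constructor
  · intro H
    choose z hz hzF hzf using fun j =>
      exists_nonneg_vecMul_eq_dotProduct_le hne (g := G j) (c := h j) fun ν hν => H ν hν j
    refine ⟨(of z)ᵀ, fun i j => hz j i, fun j => ?_, ?_⟩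
    · simpa [mulVec, dotProduct_comm] using hzf j
    · ext j k
      rw [transpose_transpose, mul_apply_eq_vecMul]
      exact (congrFun (hzF j) k).symm
  · rintro ⟨Z, hZ, hZf, rfl⟩ ν hν
    rw [← mulVec_mulVec]
    exact (mulVec_le_mulVec_of_nonneg (fun i j => hZ j i) hν).trans hZf

theorem stmt_17 (m n p : ℕ)
    (G : Matrix (Fin m) (Fin n) ℝ) (F : Matrix (Fin p) (Fin n) ℝ)
    (h : Fin m → ℝ) (f : Fin p → ℝ)
    (hne : {ν : Fin n → ℝ | F.mulVec ν ≤ f}.Nonempty)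
    (hbdd : Bornology.IsBounded {ν : Fin n → ℝ | F.mulVec ν ≤ f}) :
    (∀ ν : Fin n → ℝ, F.mulVec ν ≤ f → G.mulVec ν ≤ h) ↔
      ∃ Z : Matrix (Fin p) (Fin m) ℝ,
        (∀ i j, 0 ≤ Z i j) ∧ Zᵀ.mulVec f ≤ h ∧ G = Zᵀ * F :=
  stmt_17_general m n p G F h f hne
end
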